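/- For every even integer m ≥ 6, the chromatic number of the graph H_m is 3. -/
import Mathlib


open SimpleGraph

/-- Vertex type for the graphs on `2m+1` vertices: `Sum.inl i` is the vertex `pᵢ`,
`Sum.inr (Sum.inl i)` is the vertex `qᵢ` (indices taken modulo `m`),
and `Sum.inr (Sum.inr ())` is the apex vertex `a`. -/
abbrev GVert (m : ℕ) := Sum (ZMod m) (Sum (ZMod m) Unit)

/-- The vertex `pᵢ`. -/
def pV {m : ℕ} (i : ZMod m) : GVert m := Sum.inl i

/-- The vertex `qᵢ`. -/
def qV {m : ℕ} (i : ZMod m) : GVert m := Sum.inr (Sum.inl i)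

/-- The apex vertex `a`. -/
def aV (m : ℕ) : GVert m := Sum.inr (Sum.inr ())

/-- The graph `H_m` (intended for even `m ≥ 6`): edges are `a qᵢ` for all `i`,
`pᵢ pᵢ₊₁` for all `i`, and `pᵢ q_{i + (2k-1)}` for all `i` and `0 ≤ k ≤ (m-2)/2`,
all indices taken modulo `m`. -/
def HGraph (m : ℕ) : SimpleGraph (GVert m) :=
  SimpleGraph.fromRel (fun u v =>
    (∃ i : ZMod m, u = aV m ∧ v = qV i) ∨
    (∃ i : ZMod m, u = pV i ∧ v = pV (i + 1)) ∨
    (∃ (i : ZMod m) (k : ℕ), k ≤ (m - 2) / 2 ∧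
      u = pV i ∧ v = qV (i + (2 * (k : ZMod m) - 1))))


/-- The parity color in `Fin 3` of an element of `ZMod 2`. -/
def par2 (x : ZMod 2) : Fin 3 := if x = 0 then 0 else 1

lemma par2_ne_succ (x y : ZMod 2) (h : y = x + 1) : par2 x ≠ par2 y := by
  revert h; revert x y; decide

lemma par2_ne_two (x : ZMod 2) : par2 x ≠ 2 := by revert x; decide

/-- The explicit 3-coloring of `H_m`. -/
def hcol (m : ℕ) (hdvd : (2:ℕ) ∣ m) : GVert m → Fin 3 :=
  Sum.elim (fun i => par2 (ZMod.castHom hdvd (ZMod 2) i))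
    (Sum.elim (fun i => par2 (ZMod.castHom hdvd (ZMod 2) i)) (fun _ => 2))

lemma hcol_valid (m : ℕ) (hdvd : (2:ℕ) ∣ m) {u v : GVert m}
    (h : (HGraph m).Adj u v) : hcol m hdvd u ≠ hcol m hdvd v := by
  set g := ZMod.castHom hdvd (ZMod 2) with hg
  have key : ∀ i : ZMod m, g (i + 1) = g i + 1 := fun i => by rw [map_add, map_one]
  have key2 : ∀ (i : ZMod m) (k : ℕ), g (i + (2 * (k : ZMod m) - 1)) = g i + 1 := by
    intro i k
    rw [map_add, map_sub, map_mul, map_one]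
    have h2 : g 2 = 0 := by
      rw [show (2 : ZMod m) = ((2:ℕ) : ZMod m) by norm_cast, map_natCast]; decide
    rw [h2, zero_mul, zero_sub, show (-1 : ZMod 2) = 1 by decide]
  obtain ⟨hne, hrel⟩ := h
  rcases hrel with (⟨i, rfl, rfl⟩ | ⟨i, rfl, rfl⟩ | ⟨i, k, hk, rfl, rfl⟩) |
    (⟨i, rfl, rfl⟩ | ⟨i, rfl, rfl⟩ | ⟨i, k, hk, rfl, rfl⟩)
  · exact fun h => par2_ne_two _ h.symm
  · exact par2_ne_succ _ _ (key i)
  · exact par2_ne_succ _ _ (key2 i k)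
  · exact par2_ne_two _
  · exact (par2_ne_succ _ _ (key i)).symm
  · exact (par2_ne_succ _ _ (key2 i k)).symm

/-- For every even integer `m ≥ 6`, the chromatic number of the graph `H_m` is `3`. -/
theorem hGraph_chromaticNumber (m : ℕ) (h6 : 6 ≤ m) (heven : Even m) :
    (HGraph m).chromaticNumber = 3 := by
  have hdvd : (2:ℕ) ∣ m := heven.two_dvd
  haveI : Fact (1 < m) := ⟨by omega⟩
  apply le_antisymm
  · rw [show (3:ℕ∞) = ((3:ℕ):ℕ∞) by rfl, chromaticNumber_le_iff_colorable]
    exact ⟨⟨hcol m hdvd, hcol_valid m hdvd⟩⟩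
  · by_contra hlt
    rw [not_le] at hlt
    have h2 : (HGraph m).chromaticNumber ≤ ((2:ℕ):ℕ∞) := by
      exact Order.le_of_lt_add_one (by norm_num at hlt ⊢; exact_mod_cast hlt)
    rw [chromaticNumber_le_iff_colorable] at h2
    obtain ⟨C⟩ := h2
    -- the odd cycle  a, q₁, p₀, p₁, q₂  of length 5
    have hk1 : (1:ℕ) ≤ (m-2)/2 := by omega
    have adj1 : (HGraph m).Adj (aV m) (qV (1 : ZMod m)) := by
      refine ⟨by simp [aV, qV], Or.inl (Or.inl ⟨1, rfl, rfl⟩)⟩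
    have adj2 : (HGraph m).Adj (pV (0 : ZMod m)) (qV (1 : ZMod m)) := by
      refine ⟨by simp [pV, qV], Or.inl (Or.inr (Or.inr ⟨0, 1, hk1, rfl, ?_⟩))⟩
      norm_num
    have adj3 : (HGraph m).Adj (pV (0 : ZMod m)) (pV (1 : ZMod m)) := by
      refine ⟨?_, Or.inl (Or.inr (Or.inl ⟨0, rfl, by norm_num⟩))⟩
      simp only [pV, ne_eq, Sum.inl.injEq]
      exact zero_ne_one
    have adj4 : (HGraph m).Adj (pV (1 : ZMod m)) (qV (2 : ZMod m)) := by
      refine ⟨by simp [pV, qV], Or.inl (Or.inr (Or.inr ⟨1, 1, hk1, rfl, ?_⟩))⟩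
      norm_num
    have adj5 : (HGraph m).Adj (aV m) (qV (2 : ZMod m)) := by
      refine ⟨by simp [aV, qV], Or.inl (Or.inl ⟨2, rfl, rfl⟩)⟩
    have c1 := C.valid adj1
    have c2 := C.valid adj2
    have c3 := C.valid adj3
    have c4 := C.valid adj4
    have c5 := C.valid adj5
    set x0 := C (aV m); set x1 := C (qV (1:ZMod m)); set x2 := C (pV (0:ZMod m))
    set x3 := C (pV (1:ZMod m)); set x4 := C (qV (2:ZMod m))
    have h0 := x0.isLt; have h1 := x1.isLt; have h2 := x2.isLt
    have h3 := x3.isLt; have h4 := x4.isLt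
    simp only [Ne, Fin.ext_iff] at c1 c2 c3 c4 c5
    omega
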